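/- Let A be a commutative algebra over ℂ, let D = (D_p)_{p≥0} be a normalized higher derivation on A, let k ≥ 0, let N ≥ 2 and let q ∈ ℂ be a primitive N-th root of unity. Fix integers n ≥ i ≥ 1 with i ≤ N−1, and let (qb)^i : A^{⊗(n+1)} → A^{⊗(n−i+1)} and (qb)^{N−i} : A^{⊗(n+N−i+1)} → A^{⊗(n+1)} denote the indicated composites of q-Hochschild differentials. Then L_D^{k,(n)} maps ker((qb)^i) into ker((qb)^i) and maps range((qb)^{N−i}) into range((qb)^{N−i}); consequently the higher derivation D induces, for each k, a ℂ-linear endomorphism of the q-Hochschild homology group H_{i,n} := ker((qb)^i) / (ker((qb)^i) ∩ range((qb)^{N−i})). -/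

import Mathlib

/-!
Write `D_t = ∑ₚ Dₚ tᵖ`; the Leibniz rule says that `D_t` is multiplicative, and `L_D^{k}` is the
coefficient of `tᵏ` in `D_t^{⊗(n+1)}`. An inner face map multiplies two adjacent tensor factors,
so it commutes with `L_D^{k}` by the Leibniz rule; the cyclic face is the zeroth face after a
rotation of the factors, and `L_D^{k}` is symmetric in the factors. Hence `L_D^{k}` commutes with
every `q`-Hochschild differential and with their iterates, so it preserves their kernels and
images and descends to `H_{i,n}`.
-/

open PiTensorProduct Finset
open scoped TensorProduct

/-- The `q`-Hochschild differential `qb_s : A^{⊗(s+1)} → A^{⊗s}` built from a family `d` of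
face maps, namely `qb_s = ∑_{i=0}^{s} q^i d_s^i` for `s ≥ 1` (and `0`, unused, for `s = 0`). -/
noncomputable def qbChain {A : Type*} [CommRing A] [Algebra ℂ A] (q : ℂ)
    (d : ∀ m : ℕ, Fin (m + 2) → ((⨂[ℂ] _ : Fin (m + 2), A) →ₗ[ℂ] ⨂[ℂ] _ : Fin (m + 1), A)) :
    ∀ s : ℕ, (⨂[ℂ] _ : Fin (s + 1), A) →ₗ[ℂ] ⨂[ℂ] _ : Fin s, A
  | 0 => 0
  | s + 1 => ∑ i : Fin (s + 2), q ^ (i : ℕ) • d s i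

/-- The composite `qb_{base+1} ∘ ⋯ ∘ qb_{base+k} : A^{⊗(base+k+1)} → A^{⊗(base+1)}`
(with the convention of `qbChain`), i.e. the `k`-fold iterate of the `q`-Hochschild
differential ending at tensor degree `base`. -/
noncomputable def qbIter {A : Type*} [CommRing A] [Algebra ℂ A] (q : ℂ)
    (d : ∀ m : ℕ, Fin (m + 2) → ((⨂[ℂ] _ : Fin (m + 2), A) →ₗ[ℂ] ⨂[ℂ] _ : Fin (m + 1), A)) :
    ∀ (k base : ℕ), (⨂[ℂ] _ : Fin (base + k), A) →ₗ[ℂ] ⨂[ℂ] _ : Fin base, A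
  | 0, _ => LinearMap.id
  | k + 1, base => qbIter q d k base ∘ₗ qbChain q d (base + k)

namespace Finset.Nat

theorem sum_antidiagonalTuple_succ {M : Type*} [AddCommMonoid M] (m n : ℕ)
    (f : (Fin (m + 1) → ℕ) → M) :
    ∑ p ∈ antidiagonalTuple (m + 1) n, f p =
      ∑ ij ∈ antidiagonal n, ∑ p ∈ antidiagonalTuple m ij.2, f (Fin.cons ij.1 p) := by
  rw [Finset.sum_sigma']
  refine Finset.sum_nbij' (fun p => ⟨(p 0, n - p 0), Fin.tail p⟩)
    (fun x => Fin.cons x.1.1 x.2) ?_ ?_ ?_ ?_ ?_ <;>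
    simp +contextual [mem_antidiagonalTuple, Fin.sum_univ_succ, Fin.tail]
  · omega
  · rintro ⟨⟨i, j⟩, p⟩ (rfl : i + j = n) -
    simp

theorem sum_antidiagonal_assoc {M : Type*} [AddCommMonoid M] (n : ℕ)
    (f : ℕ → ℕ → ℕ → M) :
    ∑ ij ∈ antidiagonal n, ∑ kl ∈ antidiagonal ij.1, f kl.1 kl.2 ij.2 =
      ∑ ij ∈ antidiagonal n, ∑ kl ∈ antidiagonal ij.2, f ij.1 kl.1 kl.2 := by
  rw [Finset.sum_sigma', Finset.sum_sigma']
  refine Finset.sum_nbij' (fun x => ⟨(x.2.1, x.2.2 + x.1.2), (x.2.2, x.1.2)⟩)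
    (fun x => ⟨(x.1.1 + x.2.1, x.2.2), (x.1.1, x.2.1)⟩) ?_ ?_ ?_ ?_ ?_ <;>
    aesop (add simp [add_assoc])

end Finset.Nat

section TensorPower

variable {R A : Type*} [CommSemiring R] [Semiring A] [Algebra R A]

noncomputable def tensorCons (n : ℕ) :
    A →ₗ[R] (⨂[R] _ : Fin n, A) →ₗ[R] ⨂[R] _ : Fin (n + 1), A :=
  (PiTensorProduct.lift (R := R) (s := fun _ : Fin n => A)).toLinearMap ∘ₗ
    (tprod R : MultilinearMap R (fun _ : Fin (n + 1) => A) _).curryLeft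

@[simp]
theorem tensorCons_tprod (n : ℕ) (x : A) (a : Fin n → A) :
    tensorCons n x (tprod R a) = tprod R (Fin.cons x a : Fin (n + 1) → A) := by
  simp [tensorCons]

def IsHigherDerivation (D : ℕ → A →ₗ[R] A) : Prop :=
  ∀ (p : ℕ) (a a' : A), D p (a * a') = ∑ i ∈ range (p + 1), D i a * D (p - i) a'

theorem IsHigherDerivation.apply_mul {D : ℕ → A →ₗ[R] A} (hD : IsHigherDerivation D)
    (p : ℕ) (a a' : A) : D p (a * a') = ∑ ij ∈ antidiagonal p, D ij.1 a * D ij.2 a' := by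
  rw [hD, Finset.Nat.sum_antidiagonal_eq_sum_range_succ_mk]

noncomputable def higherDerivTensor (D : ℕ → A →ₗ[R] A) (k n : ℕ) :
    (⨂[R] _ : Fin n, A) →ₗ[R] ⨂[R] _ : Fin n, A :=
  ∑ p ∈ Finset.Nat.antidiagonalTuple n k, PiTensorProduct.map fun s => D (p s)

variable (D : ℕ → A →ₗ[R] A)

theorem higherDerivTensor_tprod (k n : ℕ) (a : Fin n → A) :
    higherDerivTensor D k n (tprod R a) =
      ∑ p ∈ Finset.Nat.antidiagonalTuple n k, tprod R fun s => D (p s) (a s) := by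
  simp [higherDerivTensor, LinearMap.sum_apply]

theorem higherDerivTensor_tensorCons (k n : ℕ) (x : A) (y : ⨂[R] _ : Fin n, A) :
    higherDerivTensor D k (n + 1) (tensorCons n x y) =
      ∑ ij ∈ antidiagonal k, tensorCons n (D ij.1 x) (higherDerivTensor D ij.2 n y) := by
  induction y using PiTensorProduct.induction_on with
  | smul_tprod r a =>
    simp only [map_smul, tensorCons_tprod, higherDerivTensor_tprod, map_sum,
      Finset.Nat.sum_antidiagonalTuple_succ, ← Finset.smul_sum]
    refine congrArg (r • ·) (sum_congr rfl fun ij _ => sum_congr rfl fun p _ => ?_)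
    congr 1
    ext s; cases s using Fin.cases <;> rfl
  | add y z hy hz => simp only [map_add, hy, hz, Finset.sum_add_distrib]

theorem higherDerivTensor_comp_reindex (k n : ℕ) (e : Fin n ≃ Fin n) :
    higherDerivTensor D k n ∘ₗ (reindex R (fun _ => A) e).toLinearMap =
      (reindex R (fun _ => A) e).toLinearMap ∘ₗ higherDerivTensor D k n := by
  ext a
  simp only [LinearMap.compMultilinearMap_apply, LinearMap.comp_apply, LinearEquiv.coe_coe,
    reindex_tprod, higherDerivTensor_tprod, map_sum]
  refine Finset.sum_nbij' (fun p => p ∘ e) (fun p => p ∘ e.symm) ?_ ?_ ?_ ?_ ?_ <;>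
    simp [Finset.Nat.mem_antidiagonalTuple, Function.comp_def, e.sum_comp, e.symm.sum_comp]

variable {D}

def IsHochschildFaces
    (d : ∀ m : ℕ, Fin (m + 2) → ((⨂[R] _ : Fin (m + 2), A) →ₗ[R] ⨂[R] _ : Fin (m + 1), A)) :
    Prop :=
  ∀ (m : ℕ) (l : Fin (m + 2)) (a : Fin (m + 2) → A),
    d m l (tprod R a) =
      if (l : ℕ) < m + 1 then
        tprod R (fun s : Fin (m + 1) =>
          if (s : ℕ) < (l : ℕ) then a s.castSucc
          else if (s : ℕ) = (l : ℕ) then a s.castSucc * a s.succ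
          else a s.succ)
      else
        tprod R (fun s : Fin (m + 1) =>
          if (s : ℕ) = 0 then a (Fin.last (m + 1)) * a 0 else a s.castSucc)

namespace IsHochschildFaces

variable {d : ∀ m : ℕ, Fin (m + 2) → ((⨂[R] _ : Fin (m + 2), A) →ₗ[R] ⨂[R] _ : Fin (m + 1), A)}

theorem apply_zero_tensorCons_tensorCons (hd : IsHochschildFaces d) (m : ℕ) (x y : A)
    (z : ⨂[R] _ : Fin m, A) :
    d m 0 (tensorCons (m + 1) x (tensorCons m y z)) = tensorCons m (x * y) z := by
  induction z using PiTensorProduct.induction_on with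
  | smul_tprod r a =>
    simp only [map_smul, tensorCons_tprod]
    rw [hd, if_pos (by simp)]
    congr 2
    ext s; cases s using Fin.cases <;> simp
  | add y z hy hz => simp only [map_add, hy, hz]

theorem apply_castSucc_succ_tensorCons (hd : IsHochschildFaces d) (m : ℕ) (l : Fin (m + 1))
    (x : A) (y : ⨂[R] _ : Fin (m + 2), A) :
    d (m + 1) l.succ.castSucc (tensorCons (m + 2) x y) =
      tensorCons (m + 1) x (d m l.castSucc y) := by
  induction y using PiTensorProduct.induction_on with
  | smul_tprod r a =>
    simp only [map_smul, tensorCons_tprod]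
    rw [hd, hd,
      if_pos (show (l.succ.castSucc : ℕ) < m + 1 + 1 from Nat.succ_lt_succ l.isLt),
      if_pos (show (l.castSucc : ℕ) < m + 1 from l.isLt), tensorCons_tprod]
    congr 2
    ext s; cases s using Fin.cases <;> simp
  | add y z hy hz => simp only [map_add, hy, hz]

theorem apply_last (hd : IsHochschildFaces d) (m : ℕ) :
    d m (Fin.last (m + 1)) =
      d m 0 ∘ₗ (reindex R (fun _ => A) (finRotate (m + 2))).toLinearMap := by
  ext a
  simp only [LinearMap.compMultilinearMap_apply, LinearMap.comp_apply, LinearEquiv.coe_coe,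
    reindex_tprod]
  have h0 : (finRotate (m + 2)).symm 0 = Fin.last (m + 1) :=
    (Equiv.symm_apply_eq _).2 finRotate_last.symm
  have hsucc (j : Fin (m + 1)) : (finRotate (m + 2)).symm j.succ = j.castSucc :=
    (Equiv.symm_apply_eq _).2 (by rw [finRotate_apply, Fin.coeSucc_eq_succ])
  rw [hd, hd, if_neg (by simp), if_pos (by simp)]
  congr 1
  ext s
  cases s using Fin.cases with
  | zero =>
    simp only [Fin.val_zero, lt_irrefl, if_true, if_false, Fin.castSucc_zero]
    exact congrArg₂ _ (congrArg a h0.symm) (congrArg a (hsucc 0).symm)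
  | succ j =>
    simp only [Fin.val_succ, Fin.val_zero, Nat.add_one_ne_zero, Nat.not_lt_zero, if_false]
    exact congrArg a (hsucc j.succ).symm

theorem zero_comp_higherDerivTensor (hD : IsHigherDerivation D) (hd : IsHochschildFaces d)
    (m k : ℕ) :
    d m 0 ∘ₗ higherDerivTensor D k (m + 2) = higherDerivTensor D k (m + 1) ∘ₗ d m 0 := by
  ext a
  induction a using Fin.consCases with | cons x a =>
  induction a using Fin.consCases with | cons y a =>
  simp only [LinearMap.compMultilinearMap_apply, LinearMap.comp_apply, ← tensorCons_tprod,
    higherDerivTensor_tensorCons, hd.apply_zero_tensorCons_tensorCons, map_sum, hD.apply_mul,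
    LinearMap.sum_apply]
  -- the Leibniz rule has split the merged slot; what is left is associativity of `antidiagonal`
  exact (Finset.Nat.sum_antidiagonal_assoc k fun i j l =>
    tensorCons m (D i x * D j y) (higherDerivTensor D l m (tprod R a))).symm

theorem castSucc_comp_higherDerivTensor (hD : IsHigherDerivation D) (hd : IsHochschildFaces d)
    (m : ℕ) (l : Fin (m + 1)) (k : ℕ) :
    d m l.castSucc ∘ₗ higherDerivTensor D k (m + 2) =
      higherDerivTensor D k (m + 1) ∘ₗ d m l.castSucc := by
  induction m generalizing k with
  | zero => rw [Fin.fin_one_eq_zero l]; exact hd.zero_comp_higherDerivTensor hD 0 k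
  | succ m ih =>
    cases l using Fin.cases with
    | zero => exact hd.zero_comp_higherDerivTensor hD (m + 1) k
    | succ l =>
      ext a
      induction a using Fin.consCases with | cons x a =>
      have ih_tprod k := LinearMap.congr_fun (ih l k) (tprod R a)
      simp only [LinearMap.comp_apply] at ih_tprod
      simp only [LinearMap.compMultilinearMap_apply, LinearMap.comp_apply, ← tensorCons_tprod,
        higherDerivTensor_tensorCons, map_sum, hd.apply_castSucc_succ_tensorCons, ih_tprod]

theorem comp_higherDerivTensor (hD : IsHigherDerivation D) (hd : IsHochschildFaces d)
    (m : ℕ) (l : Fin (m + 2)) (k : ℕ) :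
    d m l ∘ₗ higherDerivTensor D k (m + 2) = higherDerivTensor D k (m + 1) ∘ₗ d m l := by
  cases l using Fin.lastCases with
  | cast l => exact hd.castSucc_comp_higherDerivTensor hD m l k
  | last =>
    rw [hd.apply_last, LinearMap.comp_assoc, ← higherDerivTensor_comp_reindex,
      ← LinearMap.comp_assoc, hd.zero_comp_higherDerivTensor hD, LinearMap.comp_assoc]

end IsHochschildFaces

end TensorPower

section QHochschild

variable {A : Type*} [CommRing A] [Algebra ℂ A] {D : ℕ → A →ₗ[ℂ] A}
  {d : ∀ m : ℕ, Fin (m + 2) → ((⨂[ℂ] _ : Fin (m + 2), A) →ₗ[ℂ] ⨂[ℂ] _ : Fin (m + 1), A)}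

theorem qbChain_comp_higherDerivTensor (hD : IsHigherDerivation D) (hd : IsHochschildFaces d)
    (q : ℂ) (k s : ℕ) :
    qbChain q d s ∘ₗ higherDerivTensor D k (s + 1) =
      higherDerivTensor D k s ∘ₗ qbChain q d s := by
  cases s with
  | zero => simp [qbChain]
  | succ s =>
    refine LinearMap.ext fun x => ?_
    simp only [qbChain, LinearMap.comp_apply, LinearMap.sum_apply, LinearMap.smul_apply, map_sum,
      map_smul]
    refine Finset.sum_congr rfl fun l _ => ?_
    rw [← LinearMap.comp_apply, hd.comp_higherDerivTensor hD, LinearMap.comp_apply]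

theorem qbIter_comp_higherDerivTensor (hD : IsHigherDerivation D) (hd : IsHochschildFaces d)
    (q : ℂ) (k c base : ℕ) :
    qbIter q d c base ∘ₗ higherDerivTensor D k (base + c) =
      higherDerivTensor D k base ∘ₗ qbIter q d c base := by
  induction c with
  | zero => rfl
  | succ c ih =>
    change qbIter q d c base ∘ₗ qbChain q d (base + c) ∘ₗ
      higherDerivTensor D k (base + c + 1) = _
    rw [qbChain_comp_higherDerivTensor hD hd, ← LinearMap.comp_assoc, ih, LinearMap.comp_assoc,
      qbIter]

end QHochschild

theorem higher_derivation_induces_q_hochschild_endomorphism_general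
    {A : Type*} [CommRing A] [Algebra ℂ A]
    (D : ℕ → (A →ₗ[ℂ] A))
    (hD : ∀ (p : ℕ) (a a' : A),
      D p (a * a') = ∑ i ∈ Finset.range (p + 1), D i a * D (p - i) a')
    (k : ℕ) (q : ℂ)
    (t i j : ℕ)
    (d : ∀ m : ℕ, Fin (m + 2) → ((⨂[ℂ] _ : Fin (m + 2), A) →ₗ[ℂ] ⨂[ℂ] _ : Fin (m + 1), A))
    (hd : ∀ (m : ℕ) (l : Fin (m + 2)) (a : Fin (m + 2) → A),
      d m l (tprod ℂ a) =
        if (l : ℕ) < m + 1 then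
          tprod ℂ (fun s : Fin (m + 1) =>
            if (s : ℕ) < (l : ℕ) then a s.castSucc
            else if (s : ℕ) = (l : ℕ) then a s.castSucc * a s.succ
            else a s.succ)
        else
          tprod ℂ (fun s : Fin (m + 1) =>
            if (s : ℕ) = 0 then a (Fin.last (m + 1)) * a 0 else a s.castSucc))
    (LDk : (⨂[ℂ] _ : Fin (t + 1 + i), A) →ₗ[ℂ] ⨂[ℂ] _ : Fin (t + 1 + i), A)
    (hLDk : ∀ a : Fin (t + 1 + i) → A,
      LDk (tprod ℂ a) =
        ∑ p ∈ Finset.Nat.antidiagonalTuple (t + 1 + i) k, tprod ℂ (fun s => D (p s) (a s))) :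
    ∃ hker : ∀ x ∈ LinearMap.ker (qbIter q d i (t + 1)),
        LDk x ∈ LinearMap.ker (qbIter q d i (t + 1)),
      (∀ x ∈ LinearMap.range (qbIter q d j (t + 1 + i)),
        LDk x ∈ LinearMap.range (qbIter q d j (t + 1 + i))) ∧
      ∃ Lbar :
          (LinearMap.ker (qbIter q d i (t + 1)) ⧸
            Submodule.comap (LinearMap.ker (qbIter q d i (t + 1))).subtype
              (LinearMap.range (qbIter q d j (t + 1 + i)))) →ₗ[ℂ]
          (LinearMap.ker (qbIter q d i (t + 1)) ⧸
            Submodule.comap (LinearMap.ker (qbIter q d i (t + 1))).subtype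
              (LinearMap.range (qbIter q d j (t + 1 + i)))),
        ∀ (x : ⨂[ℂ] _ : Fin (t + 1 + i), A) (hx : x ∈ LinearMap.ker (qbIter q d i (t + 1))),
          Lbar (Submodule.Quotient.mk ⟨x, hx⟩) =
            Submodule.Quotient.mk ⟨LDk x, hker x hx⟩ := by
  have hL : LDk = higherDerivTensor D k (t + 1 + i) := by
    ext a
    simp [hLDk, higherDerivTensor_tprod]
  have hcomm (c base : ℕ) := qbIter_comp_higherDerivTensor hD hd q k c base
  have hker : ∀ x ∈ LinearMap.ker (qbIter q d i (t + 1)),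
      LDk x ∈ LinearMap.ker (qbIter q d i (t + 1)) := by
    intro x hx
    rw [LinearMap.mem_ker] at hx ⊢
    rw [hL, ← LinearMap.comp_apply, hcomm, LinearMap.comp_apply, hx, map_zero]
  have hrange : ∀ x ∈ LinearMap.range (qbIter q d j (t + 1 + i)),
      LDk x ∈ LinearMap.range (qbIter q d j (t + 1 + i)) := by
    rintro _ ⟨y, rfl⟩
    exact ⟨higherDerivTensor D k _ y, by rw [hL, ← LinearMap.comp_apply, hcomm]; rfl⟩
  exact ⟨hker, hrange, Submodule.mapQ _ _ (LDk.restrict hker) fun x hx => hrange x hx,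
    fun _ _ => rfl⟩

/-- Let `D = (D_p)` be a normalized higher derivation on `A`, `k ≥ 0`, and let
`q` be a primitive `N`-th root of unity with `N = i + j ≥ 2`, `i, j ≥ 1`, and `n = t + i`
(so `1 ≤ i ≤ n` and `i ≤ N − 1`). The operator `L_D^{k}` on `A^{⊗(n+1)} = A^{⊗((t+1)+i)}`
preserves `ker((qb)^i)` and `range((qb)^{N−i})`, and hence induces, for each `k`, a
ℂ-linear endomorphism of the `q`-Hochschild homology group
`H_{i,n} = ker((qb)^i) / (ker((qb)^i) ∩ range((qb)^{N−i}))`. -/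
theorem higher_derivation_induces_q_hochschild_endomorphism
    {A : Type*} [CommRing A] [Algebra ℂ A]
    (D : ℕ → (A →ₗ[ℂ] A)) (hD0 : D 0 = LinearMap.id)
    (hD : ∀ (p : ℕ) (a a' : A),
      D p (a * a') = ∑ i ∈ Finset.range (p + 1), D i a * D (p - i) a')
    (k : ℕ) (N : ℕ) (q : ℂ) (hq : IsPrimitiveRoot q N)
    (t i j : ℕ) (hi : 1 ≤ i) (hj : 1 ≤ j) (hN : N = i + j)
    (d : ∀ m : ℕ, Fin (m + 2) → ((⨂[ℂ] _ : Fin (m + 2), A) →ₗ[ℂ] ⨂[ℂ] _ : Fin (m + 1), A))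
    (hd : ∀ (m : ℕ) (l : Fin (m + 2)) (a : Fin (m + 2) → A),
      d m l (tprod ℂ a) =
        if (l : ℕ) < m + 1 then
          tprod ℂ (fun s : Fin (m + 1) =>
            if (s : ℕ) < (l : ℕ) then a s.castSucc
            else if (s : ℕ) = (l : ℕ) then a s.castSucc * a s.succ
            else a s.succ)
        else
          tprod ℂ (fun s : Fin (m + 1) =>
            if (s : ℕ) = 0 then a (Fin.last (m + 1)) * a 0 else a s.castSucc))
    (LDk : (⨂[ℂ] _ : Fin (t + 1 + i), A) →ₗ[ℂ] ⨂[ℂ] _ : Fin (t + 1 + i), A)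
    (hLDk : ∀ a : Fin (t + 1 + i) → A,
      LDk (tprod ℂ a) =
        ∑ p ∈ Finset.Nat.antidiagonalTuple (t + 1 + i) k, tprod ℂ (fun s => D (p s) (a s))) :
    ∃ hker : ∀ x ∈ LinearMap.ker (qbIter q d i (t + 1)),
        LDk x ∈ LinearMap.ker (qbIter q d i (t + 1)),
      (∀ x ∈ LinearMap.range (qbIter q d j (t + 1 + i)),
        LDk x ∈ LinearMap.range (qbIter q d j (t + 1 + i))) ∧
      ∃ Lbar :
          (LinearMap.ker (qbIter q d i (t + 1)) ⧸
            Submodule.comap (LinearMap.ker (qbIter q d i (t + 1))).subtype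
              (LinearMap.range (qbIter q d j (t + 1 + i)))) →ₗ[ℂ]
          (LinearMap.ker (qbIter q d i (t + 1)) ⧸
            Submodule.comap (LinearMap.ker (qbIter q d i (t + 1))).subtype
              (LinearMap.range (qbIter q d j (t + 1 + i)))),
        ∀ (x : ⨂[ℂ] _ : Fin (t + 1 + i), A) (hx : x ∈ LinearMap.ker (qbIter q d i (t + 1))),
          Lbar (Submodule.Quotient.mk ⟨x, hx⟩) =
            Submodule.Quotient.mk ⟨LDk x, hker x hx⟩ :=
  higher_derivation_induces_q_hochschild_endomorphism_general D hD k q t i j d hd LDk hLDk
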